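/- arXiv:quant-ph/0012128 — 3 statements merged into one kernel-verified Lean document; each statement's English description precedes it below -/
import Mathlib

section
/- Let C be a positive semidefinite operator on H₁⊗H₂, Π a projection on H₁⊗H₂, and Π₀ a projection on H₂ such that Π ≥ 1⊗Π₀. Then Tr₂(Π C Π) ≥ Tr₂((1⊗Π₀) C (1⊗Π₀)) in the Loewner order. -/
/-!
Since `Q := 1 ⊗ Π₀` and `Π` are projections with `Q ≤ Π`, we have `QΠ = ΠQ = Q`, hence
`QCQ = Q(ΠCΠ)Q`. The partial trace over `H₂` is cyclic with respect to operators `1 ⊗ A`, so for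
the idempotent `Q` the cross terms of `(1 - Q)X(1 - Q)` collapse and
`Tr₂ X - Tr₂ (QXQ) = Tr₂ ((1 - Q)X(1 - Q))`, which is positive for `X = ΠCΠ ≥ 0`.
-/

open scoped ComplexOrder
open Matrix

noncomputable section

open Kronecker

/-- Partial trace over the second tensor factor. -/
def ptrace2 {n₁ n₂ : Type*} [Fintype n₂] (C : Matrix (n₁ × n₂) (n₁ × n₂) ℂ) :
    Matrix n₁ n₁ ℂ :=
  Matrix.of fun i j => ∑ k : n₂, C (i, k) (j, k)

section PartialTrace

variable {n₁ n₂ : Type*} [Fintype n₂]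

lemma ptrace2_eq_sum_submatrix (X : Matrix (n₁ × n₂) (n₁ × n₂) ℂ) :
    ptrace2 X = ∑ k : n₂, X.submatrix (fun i => (i, k)) (fun i => (i, k)) := by
  ext i j
  simp [ptrace2, Matrix.sum_apply]

lemma Matrix.PosSemidef.ptrace2 {X : Matrix (n₁ × n₂) (n₁ × n₂) ℂ} (hX : X.PosSemidef) :
    (ptrace2 X).PosSemidef := by
  rw [ptrace2_eq_sum_submatrix]
  exact posSemidef_sum _ fun k _ => hX.submatrix _

lemma ptrace2_add (X Y : Matrix (n₁ × n₂) (n₁ × n₂) ℂ) :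
    ptrace2 (X + Y) = ptrace2 X + ptrace2 Y := by
  ext i j
  simp [ptrace2, Finset.sum_add_distrib]

lemma ptrace2_sub (X Y : Matrix (n₁ × n₂) (n₁ × n₂) ℂ) :
    ptrace2 (X - Y) = ptrace2 X - ptrace2 Y := by
  ext i j
  simp [ptrace2, Finset.sum_sub_distrib]

variable [Fintype n₁] [DecidableEq n₁]

lemma ptrace2_one_kronecker_mul_comm (A : Matrix n₂ n₂ ℂ) (X : Matrix (n₁ × n₂) (n₁ × n₂) ℂ) :
    ptrace2 (((1 : Matrix n₁ n₁ ℂ) ⊗ₖ A) * X) = ptrace2 (X * ((1 : Matrix n₁ n₁ ℂ) ⊗ₖ A)) := by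
  ext i j
  simp only [ptrace2, of_apply, mul_apply, Fintype.sum_prod_type, kroneckerMap_apply, one_apply,
    ite_mul, mul_ite, one_mul, zero_mul, mul_zero, Finset.sum_ite_irrel, Finset.sum_const_zero,
    Finset.sum_ite_eq, Finset.sum_ite_eq', Finset.mem_univ, if_true]
  rw [Finset.sum_comm]
  simp only [mul_comm]

variable {A : Matrix n₂ n₂ ℂ}

lemma ptrace2_one_sub_mul_mul_one_sub [DecidableEq n₂] (hA : IsIdempotentElem A)
    (X : Matrix (n₁ × n₂) (n₁ × n₂) ℂ) :
    ptrace2 ((1 - (1 : Matrix n₁ n₁ ℂ) ⊗ₖ A) * X * (1 - (1 : Matrix n₁ n₁ ℂ) ⊗ₖ A)) =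
      ptrace2 X - ptrace2 (((1 : Matrix n₁ n₁ ℂ) ⊗ₖ A) * X * ((1 : Matrix n₁ n₁ ℂ) ⊗ₖ A)) := by
  set Q := (1 : Matrix n₁ n₁ ℂ) ⊗ₖ A
  have hQ : Q * Q = Q := by rw [← mul_kronecker_mul, one_mul, hA.eq]
  have hleft : ptrace2 (Q * X) = ptrace2 (Q * X * Q) := by
    rw [← ptrace2_one_kronecker_mul_comm, ← mul_assoc, hQ]
  have hright : ptrace2 (X * Q) = ptrace2 (Q * X * Q) := by
    rw [mul_assoc, ptrace2_one_kronecker_mul_comm, mul_assoc, hQ]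
  have hexpand : (1 - Q) * X * (1 - Q) = X - Q * X - X * Q + Q * X * Q := by noncomm_ring
  rw [hexpand, ptrace2_add, ptrace2_sub, ptrace2_sub, hleft, hright]
  abel

lemma isStarProjection_one_kronecker (hA : IsStarProjection A) :
    IsStarProjection ((1 : Matrix n₁ n₁ ℂ) ⊗ₖ A) where
  isIdempotentElem := by
    rw [IsIdempotentElem, ← mul_kronecker_mul, one_mul, hA.isIdempotentElem.eq]
  isSelfAdjoint := by
    rw [IsSelfAdjoint, star_eq_conjTranspose, conjTranspose_kronecker, conjTranspose_one,
      ← star_eq_conjTranspose, hA.isSelfAdjoint.star_eq]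

end PartialTrace

-- `IsStarProjection.le_iff_mul_eq_left` needs the Loewner order and C⋆-algebra structure on matrices.
open scoped MatrixOrder Matrix.Norms.L2Operator

/-- If C ≥ 0, Π, Π₀ are projections with Π ≥ 1⊗Π₀, then
Tr₂(Π C Π) ≥ Tr₂((1⊗Π₀) C (1⊗Π₀)) in the Loewner order. -/
theorem stmt_2 {n₁ n₂ : Type*} [Fintype n₁] [Fintype n₂] [DecidableEq n₁] [DecidableEq n₂]
    (C P : Matrix (n₁ × n₂) (n₁ × n₂) ℂ) (P₀ : Matrix n₂ n₂ ℂ)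
    (hC : C.PosSemidef)
    (hP : Pᴴ = P ∧ P * P = P)
    (hP₀ : P₀ᴴ = P₀ ∧ P₀ * P₀ = P₀)
    (hge : (P - (1 : Matrix n₁ n₁ ℂ) ⊗ₖ P₀).PosSemidef) :
    (ptrace2 (P * C * P) -
      ptrace2 (((1 : Matrix n₁ n₁ ℂ) ⊗ₖ P₀) * C * ((1 : Matrix n₁ n₁ ℂ) ⊗ₖ P₀))).PosSemidef := by
  set Q := (1 : Matrix n₁ n₁ ℂ) ⊗ₖ P₀
  have hQ : IsStarProjection Q := isStarProjection_one_kronecker ⟨hP₀.2, hP₀.1⟩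
  have hPproj : IsStarProjection P := ⟨hP.2, hP.1⟩
  have hQP : Q * P = Q := (hQ.le_iff_mul_eq_left hPproj).1 (le_iff.2 hge)
  have hPQ : P * Q = Q := (hQ.le_iff_mul_eq_right hPproj).1 (le_iff.2 hge)
  have hQCQ : Q * C * Q = Q * (P * C * P) * Q := by
    rw [show Q * (P * C * P) * Q = Q * P * C * (P * Q) by noncomm_ring, hQP, hPQ]
  have hPCP : (P * C * P).PosSemidef := by simpa [hP.1] using hC.mul_mul_conjTranspose_same P
  rw [hQCQ, ← ptrace2_one_sub_mul_mul_one_sub hP₀.2]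
  have hQ' : (1 - Q)ᴴ = 1 - Q := hQ.one_sub.isSelfAdjoint
  exact (hQ' ▸ hPCP.conjTranspose_mul_mul_same (1 - Q)).ptrace2
end
end

section
/- Let σ₁,…,σ_r be density operators on H₁⊗H₂ with probabilities s₁,…,s_r such that Σ_i s_i σ_i is a product state. Then I(s;σ) ≥ I(s; Tr₂ σ) + I(s; Tr₁ σ), where I(s;σ) = H(Σ_i s_i σ_i) − Σ_i s_i H(σ_i) is the Holevo quantity. -/
open scoped ComplexOrder
open Matrix

noncomputable section

/-- Von Neumann entropy (base 2) of a Hermitian matrix, via its eigenvalues. -/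
def vNE {n : Type*} [Fintype n] [DecidableEq n] (A : Matrix n n ℂ) : ℝ :=
  if h : A.IsHermitian then -∑ i, (h.eigenvalues i) * Real.logb 2 (h.eigenvalues i) else 0

/-- Holevo quantity I(s;σ) = H(Σ s_i σ_i) − Σ s_i H(σ_i). -/
def holevo {n m : Type*} [Fintype n] [DecidableEq n] [Fintype m]
    (s : m → ℝ) (σ : m → Matrix n n ℂ) : ℝ :=
  vNE (∑ i, (s i : ℂ) • σ i) - ∑ i, s i * vNE (σ i)

open Kronecker

/-- Partial trace over the first tensor factor. -/
def ptrace1 {n₁ n₂ : Type*} [Fintype n₁] (C : Matrix (n₁ × n₂) (n₁ × n₂) ℂ) :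
    Matrix n₂ n₂ ℂ :=
  Matrix.of fun i j => ∑ k : n₁, C (k, i) (k, j)

set_option linter.unusedSectionVars false

namespace Stmt5Aux

open Complex Finset Polynomial

variable {n n₁ n₂ : Type*} [Fintype n] [DecidableEq n] [Fintype n₁] [Fintype n₂]
  [DecidableEq n₁] [DecidableEq n₂]

def ent (x : ℝ) : ℝ := x * Real.logb 2 x

lemma vNE_eq {A : Matrix n n ℂ} (h : A.IsHermitian) :
    vNE A = -∑ i, ent (h.eigenvalues i) := by
  rw [vNE, dif_pos h]; rfl

lemma ent_mul {x y : ℝ} (hx : 0 ≤ x) (hy : 0 ≤ y) :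
    ent (x * y) = y * ent x + x * ent y := by
  rcases eq_or_lt_of_le hx with h | h
  · simp [ent, ← h]
  rcases eq_or_lt_of_le hy with h' | h'
  · simp [ent, ← h']
  unfold ent
  rw [Real.logb, Real.logb, Real.logb, Real.log_mul h.ne' h'.ne']
  ring

lemma charmatrix_eq (M : Matrix n n ℂ) :
    charmatrix M = diagonal (fun _ => (X : ℂ[X])) - M.map C := by
  ext i j
  by_cases h : i = j
  · subst h; simp [charmatrix_apply_eq, Matrix.map_apply]
  · simp [charmatrix_apply_ne _ _ _ h, diagonal_apply_ne _ h, Matrix.map_apply]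

lemma charpoly_diag (d : n → ℂ) :
    (diagonal d).charpoly = ∏ i, ((X : ℂ[X]) - C (d i)) := by
  rw [Matrix.charpoly, charmatrix_eq]
  have : diagonal (fun _ => (X : ℂ[X])) - (diagonal d).map C
      = diagonal fun i => (X : ℂ[X]) - C (d i) := by
    ext i j
    by_cases h : i = j
    · subst h; simp
    · simp [diagonal_apply_ne _ h, Matrix.map_apply]
  rw [this, det_diagonal]

lemma charpoly_unitary_conj {W : Matrix n n ℂ} (hW : W ∈ Matrix.unitaryGroup n ℂ)
    (D : Matrix n n ℂ) : (W * D * Wᴴ).charpoly = D.charpoly := by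
  have h2 : W * Wᴴ = 1 := Matrix.mem_unitaryGroup_iff.mp hW
  have key : charmatrix (W * D * Wᴴ) = (W.map C) * charmatrix D * (Wᴴ.map C) := by
    rw [charmatrix_eq, charmatrix_eq, Matrix.mul_sub, Matrix.sub_mul]
    have hdiag : diagonal (fun _ : n => (X : ℂ[X])) = (X : ℂ[X]) • (1 : Matrix n n ℂ[X]) := by
      ext i j; by_cases h : i = j
      · subst h; simp
      · simp [diagonal_apply_ne _ h, Matrix.one_apply_ne h]
    congr 1
    · rw [hdiag, Matrix.mul_smul, Matrix.smul_mul, mul_one, ← Matrix.map_mul, h2]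
      simp
    · rw [← Matrix.map_mul, ← Matrix.map_mul]
  have hdet : (W.map C).det * (Wᴴ.map C).det = 1 := by
    rw [← det_mul, ← Matrix.map_mul, h2]
    simp
  rw [Matrix.charpoly, Matrix.charpoly, key, det_mul, det_mul]
  ring_nf
  rw [mul_comm, ← mul_assoc, mul_comm ((Wᴴ.map ⇑C).det), hdet, one_mul]

/-- Multiset of eigenvalues is determined by any unitary diagonalization. -/
lemma eig_multiset {A : Matrix n n ℂ} (h : A.IsHermitian) {W : Matrix n n ℂ}
    (hW : W ∈ Matrix.unitaryGroup n ℂ) (d : n → ℝ)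
    (hA : A = W * diagonal (fun i => (d i : ℂ)) * Wᴴ) :
    Multiset.map h.eigenvalues Finset.univ.val = Multiset.map d Finset.univ.val := by
  have e1 : A.charpoly = ∏ i, ((X : ℂ[X]) - C ((d i : ℂ))) := by
    rw [hA, charpoly_unitary_conj hW, charpoly_diag]
  have e2 : A.charpoly = ∏ i, ((X : ℂ[X]) - C ((h.eigenvalues i : ℂ))) := by
    have hsp : A = (h.eigenvectorUnitary : Matrix n n ℂ) *
        diagonal (fun i => ((h.eigenvalues i : ℂ))) *
        (h.eigenvectorUnitary : Matrix n n ℂ)ᴴ := by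
      simpa [Matrix.star_eq_conjTranspose, Function.comp_def] using h.spectral_theorem
    conv_lhs => rw [hsp]
    rw [charpoly_unitary_conj (h.eigenvectorUnitary).2, charpoly_diag]
  have key : (Multiset.map (fun i => ((d i : ℂ))) Finset.univ.val)
      = (Multiset.map (fun i => ((h.eigenvalues i : ℂ))) Finset.univ.val) := by
    have r1 := Polynomial.roots_multiset_prod_X_sub_C
      (Multiset.map (fun i => ((d i : ℂ))) Finset.univ.val)
    have r2 := Polynomial.roots_multiset_prod_X_sub_C
      (Multiset.map (fun i => ((h.eigenvalues i : ℂ))) Finset.univ.val)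
    rw [Multiset.map_map] at r1 r2
    have p1 : (Multiset.map (fun i => (X : ℂ[X]) - C ((d i : ℂ))) Finset.univ.val).prod
        = ∏ i, ((X : ℂ[X]) - C ((d i : ℂ))) := rfl
    have p2 : (Multiset.map (fun i => (X : ℂ[X]) - C ((h.eigenvalues i : ℂ))) Finset.univ.val).prod
        = ∏ i, ((X : ℂ[X]) - C ((h.eigenvalues i : ℂ))) := rfl
    calc Multiset.map (fun i => ((d i : ℂ))) Finset.univ.val
        = ((Multiset.map (fun i => (X:ℂ[X]) - C ((d i : ℂ))) Finset.univ.val).prod).roots := by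
          rw [← r1]; rfl
      _ = A.charpoly.roots := by rw [p1, ← e1]
      _ = ((Multiset.map (fun i => (X:ℂ[X]) - C ((h.eigenvalues i : ℂ))) Finset.univ.val).prod).roots := by
          rw [p2, ← e2]
      _ = Multiset.map (fun i => ((h.eigenvalues i : ℂ))) Finset.univ.val := by rw [← r2]; rfl
  have := congrArg (Multiset.map Complex.re) key
  rw [Multiset.map_map, Multiset.map_map] at this
  simpa using this.symm

/-- Sum of a function of eigenvalues from any unitary diagonalization. -/
lemma sum_f_eig {A : Matrix n n ℂ} (h : A.IsHermitian) {W : Matrix n n ℂ}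
    (hW : W ∈ Matrix.unitaryGroup n ℂ) (d : n → ℝ)
    (hA : A = W * diagonal (fun i => (d i : ℂ)) * Wᴴ) (f : ℝ → ℝ) :
    ∑ i, f (h.eigenvalues i) = ∑ i, f (d i) := by
  have h1 : ∑ i, f (h.eigenvalues i)
      = (Multiset.map f (Multiset.map h.eigenvalues Finset.univ.val)).sum := by
    rw [Multiset.map_map]; rfl
  have h2 : ∑ i, f (d i) = (Multiset.map f (Multiset.map d Finset.univ.val)).sum := by
    rw [Multiset.map_map]; rfl
  rw [h1, h2, eig_multiset h hW d hA]

lemma quad_eq (B : Matrix n n ℂ) (v : n → ℂ) :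
    star v ⬝ᵥ B *ᵥ v = ∑ k, ∑ l, (starRingEnd ℂ) (v k) * B k l * v l := by
  simp only [dotProduct, mulVec, Pi.star_apply, Finset.mul_sum]
  exact Finset.sum_congr rfl fun k _ => Finset.sum_congr rfl fun l _ => by
    rw [← mul_assoc]; rfl

lemma conj_col_quad (A B : Matrix n n ℂ) (j : n) :
    (Aᴴ * B * A) j j = star (fun k => A k j) ⬝ᵥ B *ᵥ (fun k => A k j) := by
  rw [quad_eq]
  simp only [mul_apply, conjTranspose_apply, Finset.sum_mul]
  rw [Finset.sum_comm]
  exact Finset.sum_congr rfl fun k _ => Finset.sum_congr rfl fun l _ => by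
    simp only [Complex.star_def]
    all_goals ring

lemma key2 (ρ : Matrix (n₁ × n₂) (n₁ × n₂) ℂ) (V : Matrix n₂ n₂ ℂ) (hV : V * Vᴴ = 1)
    (x : n₁ → ℂ) :
    ∑ b : n₂, star (fun p : n₁ × n₂ => x p.1 * V p.2 b) ⬝ᵥ ρ *ᵥ (fun p : n₁ × n₂ => x p.1 * V p.2 b)
      = star x ⬝ᵥ (ptrace2 ρ) *ᵥ x := by
  have hV' : ∀ l k : n₂, ∑ b, V l b * (starRingEnd ℂ) (V k b) = if l = k then 1 else 0 := by
    intro l k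
    have := congrFun (congrFun hV l) k
    simpa [mul_apply, conjTranspose_apply, one_apply] using this
  calc ∑ b : n₂, star (fun p : n₁ × n₂ => x p.1 * V p.2 b) ⬝ᵥ ρ *ᵥ (fun p : n₁ × n₂ => x p.1 * V p.2 b)
      = ∑ b, ∑ p : n₁ × n₂, ∑ p' : n₁ × n₂,
          (starRingEnd ℂ) (x p.1) * (starRingEnd ℂ) (V p.2 b) * ρ p p' * (x p'.1 * V p'.2 b) := by
        refine Finset.sum_congr rfl fun b _ => ?_
        rw [quad_eq]
        exact Finset.sum_congr rfl fun p _ => Finset.sum_congr rfl fun p' _ => by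
          simp only [Pi.star_apply, Complex.star_def, _root_.map_mul]
          all_goals ring
    _ = ∑ p : n₁ × n₂, ∑ p' : n₁ × n₂,
          ((starRingEnd ℂ) (x p.1) * ρ p p' * x p'.1) * ∑ b, V p'.2 b * (starRingEnd ℂ) (V p.2 b) := by
        rw [Finset.sum_comm]
        refine Finset.sum_congr rfl fun p _ => ?_
        rw [Finset.sum_comm]
        refine Finset.sum_congr rfl fun p' _ => ?_
        rw [Finset.mul_sum]
        exact Finset.sum_congr rfl fun b _ => by ring
    _ = ∑ p : n₁ × n₂, ∑ p' : n₁ × n₂,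
          ((starRingEnd ℂ) (x p.1) * ρ p p' * x p'.1) * (if p'.2 = p.2 then 1 else 0) := by
        simp_rw [hV']
    _ = ∑ p : n₁ × n₂, ∑ j, (starRingEnd ℂ) (x p.1) * ρ p (j, p.2) * x j := by
        refine Finset.sum_congr rfl fun p _ => ?_
        rw [Fintype.sum_prod_type]
        simp [mul_ite]
    _ = star x ⬝ᵥ (ptrace2 ρ) *ᵥ x := by
        rw [quad_eq, Fintype.sum_prod_type]
        refine Finset.sum_congr rfl fun i _ => ?_
        rw [Finset.sum_comm]
        refine Finset.sum_congr rfl fun j _ => ?_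
        simp only [ptrace2, Matrix.of_apply, Finset.sum_mul, Finset.mul_sum]
        all_goals exact Finset.sum_congr rfl fun k _ => by ring

lemma key1 (ρ : Matrix (n₁ × n₂) (n₁ × n₂) ℂ) (U : Matrix n₁ n₁ ℂ) (hU : U * Uᴴ = 1)
    (y : n₂ → ℂ) :
    ∑ a : n₁, star (fun p : n₁ × n₂ => U p.1 a * y p.2) ⬝ᵥ ρ *ᵥ (fun p : n₁ × n₂ => U p.1 a * y p.2)
      = star y ⬝ᵥ (ptrace1 ρ) *ᵥ y := by
  have hU' : ∀ l k : n₁, ∑ a, U l a * (starRingEnd ℂ) (U k a) = if l = k then 1 else 0 := by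
    intro l k
    have := congrFun (congrFun hU l) k
    simpa [mul_apply, conjTranspose_apply, one_apply] using this
  calc ∑ a : n₁, star (fun p : n₁ × n₂ => U p.1 a * y p.2) ⬝ᵥ ρ *ᵥ (fun p : n₁ × n₂ => U p.1 a * y p.2)
      = ∑ a, ∑ p : n₁ × n₂, ∑ p' : n₁ × n₂,
          (starRingEnd ℂ) (y p.2) * (starRingEnd ℂ) (U p.1 a) * ρ p p' * (y p'.2 * U p'.1 a) := by
        refine Finset.sum_congr rfl fun a _ => ?_
        rw [quad_eq]
        exact Finset.sum_congr rfl fun p _ => Finset.sum_congr rfl fun p' _ => by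
          simp only [Pi.star_apply, Complex.star_def, _root_.map_mul]
          all_goals ring
    _ = ∑ p : n₁ × n₂, ∑ p' : n₁ × n₂,
          ((starRingEnd ℂ) (y p.2) * ρ p p' * y p'.2) * ∑ a, U p'.1 a * (starRingEnd ℂ) (U p.1 a) := by
        rw [Finset.sum_comm]
        refine Finset.sum_congr rfl fun p _ => ?_
        rw [Finset.sum_comm]
        refine Finset.sum_congr rfl fun p' _ => ?_
        rw [Finset.mul_sum]
        exact Finset.sum_congr rfl fun a _ => by ring
    _ = ∑ p : n₁ × n₂, ∑ p' : n₁ × n₂,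
          ((starRingEnd ℂ) (y p.2) * ρ p p' * y p'.2) * (if p'.1 = p.1 then 1 else 0) := by
        simp_rw [hU']
    _ = ∑ p : n₁ × n₂, ∑ j, (starRingEnd ℂ) (y p.2) * ρ p (p.1, j) * y j := by
        refine Finset.sum_congr rfl fun p _ => ?_
        rw [Fintype.sum_prod_type]
        rw [Finset.sum_comm]
        simp [mul_ite]
    _ = star y ⬝ᵥ (ptrace1 ρ) *ᵥ y := by
        rw [quad_eq, Fintype.sum_prod_type]
        rw [Finset.sum_comm]
        refine Finset.sum_congr rfl fun k _ => ?_
        rw [Finset.sum_comm]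
        refine Finset.sum_congr rfl fun j _ => ?_
        simp only [ptrace1, Matrix.of_apply, Finset.sum_mul, Finset.mul_sum]
        all_goals exact Finset.sum_congr rfl fun i _ => by ring

lemma ptrace2_posSemidef {ρ : Matrix (n₁ × n₂) (n₁ × n₂) ℂ} (hρ : ρ.PosSemidef) :
    (ptrace2 ρ).PosSemidef := by
  refine posSemidef_iff_dotProduct_mulVec.mpr ⟨?_, ?_⟩
  · ext i j
    show star (∑ k, ρ (j, k) (i, k)) = ∑ k, ρ (i, k) (j, k)
    rw [star_sum]
    exact Finset.sum_congr rfl fun k _ => congrFun (congrFun hρ.1 (i, k)) (j, k)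
  · intro x
    rw [← key2 ρ 1 (by simp) x]
    exact Finset.sum_nonneg fun b _ => hρ.dotProduct_mulVec_nonneg _

lemma ptrace1_posSemidef {ρ : Matrix (n₁ × n₂) (n₁ × n₂) ℂ} (hρ : ρ.PosSemidef) :
    (ptrace1 ρ).PosSemidef := by
  refine posSemidef_iff_dotProduct_mulVec.mpr ⟨?_, ?_⟩
  · ext i j
    show star (∑ k, ρ (k, j) (k, i)) = ∑ k, ρ (k, i) (k, j)
    rw [star_sum]
    exact Finset.sum_congr rfl fun k _ => congrFun (congrFun hρ.1 (k, i)) (k, j)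
  · intro y
    rw [← key1 ρ 1 (by simp) y]
    exact Finset.sum_nonneg fun a _ => hρ.dotProduct_mulVec_nonneg _

lemma trace_ptrace2 (ρ : Matrix (n₁ × n₂) (n₁ × n₂) ℂ) : (ptrace2 ρ).trace = ρ.trace := by
  simp [Matrix.trace, ptrace2, Matrix.diag, Fintype.sum_prod_type]

lemma trace_ptrace1 (ρ : Matrix (n₁ × n₂) (n₁ × n₂) ℂ) : (ptrace1 ρ).trace = ρ.trace := by
  rw [Matrix.trace, Matrix.trace, Fintype.sum_prod_type, Finset.sum_comm]
  simp [ptrace1, Matrix.diag]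

lemma trace_eq_sum_eig {A : Matrix n n ℂ} (h : A.IsHermitian) :
    A.trace = ((∑ i, h.eigenvalues i : ℝ) : ℂ) := by
  have hsp : A = (h.eigenvectorUnitary : Matrix n n ℂ) *
      diagonal (fun i => ((h.eigenvalues i : ℂ))) *
      (h.eigenvectorUnitary : Matrix n n ℂ)ᴴ := by
    simpa [Matrix.star_eq_conjTranspose, Function.comp_def] using h.spectral_theorem
  have h1 : (h.eigenvectorUnitary : Matrix n n ℂ)ᴴ * (h.eigenvectorUnitary : Matrix n n ℂ) = 1 := by
    have := Matrix.mem_unitaryGroup_iff'.mp (h.eigenvectorUnitary).2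
    simpa [Matrix.star_eq_conjTranspose] using this
  conv_lhs => rw [hsp]
  rw [Matrix.trace_mul_comm, ← Matrix.mul_assoc, h1, Matrix.one_mul, Matrix.trace_diagonal]
  push_cast
  rfl

lemma kron_conjTranspose (A : Matrix n₁ n₁ ℂ) (B : Matrix n₂ n₂ ℂ) :
    (A ⊗ₖ B)ᴴ = Aᴴ ⊗ₖ Bᴴ := by
  ext p p'
  simp [conjTranspose_apply, kroneckerMap_apply]

lemma kron_mem_unitary {U : Matrix n₁ n₁ ℂ} {V : Matrix n₂ n₂ ℂ}
    (hU : U ∈ Matrix.unitaryGroup n₁ ℂ) (hV : V ∈ Matrix.unitaryGroup n₂ ℂ) :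
    U ⊗ₖ V ∈ Matrix.unitaryGroup (n₁ × n₂) ℂ := by
  rw [Matrix.mem_unitaryGroup_iff]
  rw [Matrix.star_eq_conjTranspose, kron_conjTranspose, ← Matrix.mul_kronecker_mul]
  rw [show U * Uᴴ = 1 by simpa [Matrix.star_eq_conjTranspose] using Matrix.mem_unitaryGroup_iff.mp hU,
      show V * Vᴴ = 1 by simpa [Matrix.star_eq_conjTranspose] using Matrix.mem_unitaryGroup_iff.mp hV,
      Matrix.one_kronecker_one]

lemma vNE_kron {A : Matrix n₁ n₁ ℂ} {B : Matrix n₂ n₂ ℂ} (hA : A.PosSemidef) (ha : A.trace = 1)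
    (hB : B.PosSemidef) (hb : B.trace = 1) : vNE (A ⊗ₖ B) = vNE A + vNE B := by
  set α := hA.1.eigenvalues with hα
  set β := hB.1.eigenvalues with hβ
  have hspA : A = (hA.1.eigenvectorUnitary : Matrix n₁ n₁ ℂ) *
      diagonal (fun i => ((α i : ℂ))) * (hA.1.eigenvectorUnitary : Matrix n₁ n₁ ℂ)ᴴ := by
    simpa [Matrix.star_eq_conjTranspose, Function.comp_def] using hA.1.spectral_theorem
  have hspB : B = (hB.1.eigenvectorUnitary : Matrix n₂ n₂ ℂ) *
      diagonal (fun i => ((β i : ℂ))) * (hB.1.eigenvectorUnitary : Matrix n₂ n₂ ℂ)ᴴ := by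
    simpa [Matrix.star_eq_conjTranspose, Function.comp_def] using hB.1.spectral_theorem
  have hherm : (A ⊗ₖ B).IsHermitian := by
    show (A ⊗ₖ B)ᴴ = A ⊗ₖ B
    rw [kron_conjTranspose, hA.1, hB.1]
  have hspec : A ⊗ₖ B = ((hA.1.eigenvectorUnitary : Matrix n₁ n₁ ℂ) ⊗ₖ (hB.1.eigenvectorUnitary : Matrix n₂ n₂ ℂ)) *
      diagonal (fun j : n₁ × n₂ => ((α j.1 * β j.2 : ℝ) : ℂ)) *
      ((hA.1.eigenvectorUnitary : Matrix n₁ n₁ ℂ) ⊗ₖ (hB.1.eigenvectorUnitary : Matrix n₂ n₂ ℂ))ᴴ := by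
    conv_lhs => rw [hspA, hspB]
    rw [Matrix.mul_kronecker_mul, Matrix.mul_kronecker_mul, Matrix.diagonal_kronecker_diagonal,
      kron_conjTranspose]
    congr 2
    ext j
    push_cast
    rfl
  rw [vNE_eq hherm, vNE_eq hA.1, vNE_eq hB.1,
    sum_f_eig hherm (kron_mem_unitary (hA.1.eigenvectorUnitary).2 (hB.1.eigenvectorUnitary).2)
      (fun j : n₁ × n₂ => α j.1 * β j.2) hspec ent]
  have hα0 : ∀ a, 0 ≤ α a := hA.eigenvalues_nonneg
  have hβ0 : ∀ b, 0 ≤ β b := hB.eigenvalues_nonneg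
  have hsa : ∑ a, α a = 1 := by
    have := trace_eq_sum_eig hA.1
    rw [ha] at this
    exact_mod_cast this.symm
  have hsb : ∑ b, β b = 1 := by
    have := trace_eq_sum_eig hB.1
    rw [hb] at this
    exact_mod_cast this.symm
  have : ∑ j : n₁ × n₂, ent (α j.1 * β j.2) = ∑ a, ent (α a) + ∑ b, ent (β b) := by
    rw [Fintype.sum_prod_type]
    have : ∀ a, ∑ b, ent (α a * β b) = ent (α a) + α a * ∑ b, ent (β b) := by
      intro a
      have : ∀ b, ent (α a * β b) = β b * ent (α a) + α a * ent (β b) := fun b =>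
        ent_mul (hα0 a) (hβ0 b)
      simp_rw [this]
      rw [Finset.sum_add_distrib, ← Finset.sum_mul, hsb, one_mul, ← Finset.mul_sum]
    simp_rw [this]
    rw [Finset.sum_add_distrib, ← Finset.sum_mul, hsa, one_mul]
  rw [this]
  ring

lemma jensen_logb {J : Type*} [Fintype J] (c q : J → ℝ) (hc : ∀ j, 0 ≤ c j)
    (hq : ∀ j, 0 ≤ q j) (hc1 : ∑ j, c j = 1) (hsupp : ∀ j, q j = 0 → c j = 0) :
    0 < ∑ j, c j * q j ∧ ∑ j, c j * Real.logb 2 (q j) ≤ Real.logb 2 (∑ j, c j * q j) := by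
  classical
  set t : Finset J := Finset.univ.filter fun j => c j ≠ 0 with ht
  have hmem : ∀ j ∈ t, q j ∈ Set.Ioi (0 : ℝ) := by
    intro j hj
    rcases (hq j).lt_or_eq with hlt | heq
    · exact hlt
    · exact absurd (hsupp j heq.symm) (Finset.mem_filter.mp hj).2
  have hct : ∑ j ∈ t, c j = 1 := by
    rw [ht, Finset.sum_filter_ne_zero, hc1]
  have hrt : ∑ j ∈ t, c j * q j = ∑ j, c j * q j := by
    apply Finset.sum_subset (Finset.filter_subset _ _)
    intro j _ hj
    have : c j = 0 := by
      by_contra hcj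
      exact hj (Finset.mem_filter.mpr ⟨Finset.mem_univ j, hcj⟩)
    simp [this]
  have hrpos : 0 < ∑ j, c j * q j := by
    rcases (Finset.sum_nonneg fun j _ => mul_nonneg (hc j) (hq j)).lt_or_eq with hlt | heq
    · exact hlt
    · exfalso
      have hall := (Finset.sum_eq_zero_iff_of_nonneg
        (fun j (_ : j ∈ Finset.univ) => mul_nonneg (hc j) (hq j))).mp heq.symm
      have hz : ∀ j, c j = 0 := by
        intro j
        rcases mul_eq_zero.mp (hall j (Finset.mem_univ j)) with hcz | hqz
        · exact hcz
        · exact hsupp j hqz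
      simp [hz] at hc1
  refine ⟨hrpos, ?_⟩
  have hlog := (strictConcaveOn_log_Ioi.concaveOn).le_map_sum
    (t := t) (w := c) (p := q) (fun j _ => hc j) hct hmem
  simp only [smul_eq_mul] at hlog
  have hL : ∑ j, c j * Real.logb 2 (q j) = ∑ j ∈ t, c j * Real.logb 2 (q j) := by
    symm
    apply Finset.sum_subset (Finset.filter_subset _ _)
    intro j _ hj
    have : c j = 0 := by
      by_contra hcj
      exact hj (Finset.mem_filter.mpr ⟨Finset.mem_univ j, hcj⟩)
    simp [this]
  have h2 : (0 : ℝ) < Real.log 2 := Real.log_pos one_lt_two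
  rw [hL, ← hrt]
  simp only [Real.logb]
  rw [show ∑ j ∈ t, c j * (Real.log (q j) / Real.log 2)
      = (∑ j ∈ t, c j * Real.log (q j)) / Real.log 2 by
    rw [Finset.sum_div]; exact Finset.sum_congr rfl fun j _ => by ring]
  gcongr

theorem vNE_subadd (ρ : Matrix (n₁ × n₂) (n₁ × n₂) ℂ) (hρ : ρ.PosSemidef) (htr : ρ.trace = 1) :
    vNE ρ ≤ vNE (ptrace2 ρ) + vNE (ptrace1 ρ) := by
  classical
  have h : ρ.IsHermitian := hρ.1
  have h1 : (ptrace2 ρ).PosSemidef := ptrace2_posSemidef hρ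
  have h2 : (ptrace1 ρ).PosSemidef := ptrace1_posSemidef hρ
  set p : n₁ × n₂ → ℝ := h.eigenvalues with hpdef
  set α : n₁ → ℝ := h1.1.eigenvalues with hαdef
  set β : n₂ → ℝ := h2.1.eigenvalues with hβdef
  set P : Matrix (n₁ × n₂) (n₁ × n₂) ℂ := (h.eigenvectorUnitary : Matrix (n₁ × n₂) (n₁ × n₂) ℂ)
    with hPdef
  set U : Matrix n₁ n₁ ℂ := (h1.1.eigenvectorUnitary : Matrix n₁ n₁ ℂ) with hUdef
  set V : Matrix n₂ n₂ ℂ := (h2.1.eigenvectorUnitary : Matrix n₂ n₂ ℂ) with hVdef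
  have hsp : ρ = P * diagonal (fun i => ((p i : ℂ))) * Pᴴ := by
    simpa [Matrix.star_eq_conjTranspose, Function.comp_def] using h.spectral_theorem
  have hsp1 : ptrace2 ρ = U * diagonal (fun a => ((α a : ℂ))) * Uᴴ := by
    simpa [Matrix.star_eq_conjTranspose, Function.comp_def] using h1.1.spectral_theorem
  have hsp2 : ptrace1 ρ = V * diagonal (fun b => ((β b : ℂ))) * Vᴴ := by
    simpa [Matrix.star_eq_conjTranspose, Function.comp_def] using h2.1.spectral_theorem
  have hPP' : P * Pᴴ = 1 := by
    simpa [Matrix.star_eq_conjTranspose] using Matrix.mem_unitaryGroup_iff.mp (h.eigenvectorUnitary).2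
  have hPP : Pᴴ * P = 1 := by
    simpa [Matrix.star_eq_conjTranspose] using
      Matrix.mem_unitaryGroup_iff'.mp (h.eigenvectorUnitary).2
  have hUU' : U * Uᴴ = 1 := by
    simpa [Matrix.star_eq_conjTranspose] using
      Matrix.mem_unitaryGroup_iff.mp (h1.1.eigenvectorUnitary).2
  have hUU : Uᴴ * U = 1 := by
    simpa [Matrix.star_eq_conjTranspose] using
      Matrix.mem_unitaryGroup_iff'.mp (h1.1.eigenvectorUnitary).2
  have hVV' : V * Vᴴ = 1 := by
    simpa [Matrix.star_eq_conjTranspose] using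
      Matrix.mem_unitaryGroup_iff.mp (h2.1.eigenvectorUnitary).2
  have hVV : Vᴴ * V = 1 := by
    simpa [Matrix.star_eq_conjTranspose] using
      Matrix.mem_unitaryGroup_iff'.mp (h2.1.eigenvectorUnitary).2
  set W : Matrix (n₁ × n₂) (n₁ × n₂) ℂ := U ⊗ₖ V with hWdef
  have hWW' : W * Wᴴ = 1 := by
    rw [hWdef, kron_conjTranspose, ← Matrix.mul_kronecker_mul, hUU', hVV',
      Matrix.one_kronecker_one]
  have hWW : Wᴴ * W = 1 := by
    rw [hWdef, kron_conjTranspose, ← Matrix.mul_kronecker_mul, hUU, hVV,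
      Matrix.one_kronecker_one]
  set M : Matrix (n₁ × n₂) (n₁ × n₂) ℂ := Pᴴ * W with hMdef
  have hMH : Mᴴ = Wᴴ * P := by
    rw [hMdef, conjTranspose_mul, conjTranspose_conjTranspose]
  have hMM' : M * Mᴴ = 1 := by
    rw [hMdef, hMH, Matrix.mul_assoc, ← Matrix.mul_assoc W, hWW', Matrix.one_mul, hPP]
  have hMM : Mᴴ * M = 1 := by
    rw [hMdef, hMH, Matrix.mul_assoc, ← Matrix.mul_assoc P, hPP', Matrix.one_mul, hWW]
  set c : (n₁ × n₂) → (n₁ × n₂) → ℝ := fun i j => Complex.normSq (M i j) with hcdef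
  have hc0 : ∀ i j, 0 ≤ c i j := fun i j => Complex.normSq_nonneg _
  have hrow : ∀ i, ∑ j, c i j = 1 := by
    intro i
    have hh := congrFun (congrFun hMM' i) i
    rw [mul_apply, one_apply_eq] at hh
    have : ((∑ j, c i j : ℝ) : ℂ) = 1 := by
      push_cast
      rw [← hh]
      refine Finset.sum_congr rfl fun j _ => ?_
      rw [conjTranspose_apply, Complex.star_def, Complex.mul_conj]
    exact_mod_cast this
  have hcol : ∀ j, ∑ i, c i j = 1 := by
    intro j
    have hh := congrFun (congrFun hMM j) j
    rw [mul_apply, one_apply_eq] at hh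
    have : ((∑ i, c i j : ℝ) : ℂ) = 1 := by
      push_cast
      rw [← hh]
      refine Finset.sum_congr rfl fun i _ => ?_
      rw [conjTranspose_apply, Complex.star_def, mul_comm, Complex.mul_conj]
    exact_mod_cast this
  set q : n₁ × n₂ → ℝ := fun j => α j.1 * β j.2 with hqdef
  have hα0 : ∀ a, 0 ≤ α a := h1.eigenvalues_nonneg
  have hβ0 : ∀ b, 0 ≤ β b := h2.eigenvalues_nonneg
  have hp0 : ∀ i, 0 ≤ p i := hρ.eigenvalues_nonneg
  have hq0 : ∀ j, 0 ≤ q j := fun j => mul_nonneg (hα0 j.1) (hβ0 j.2)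
  have hpsum : ∑ i, p i = 1 := by
    have := trace_eq_sum_eig h
    rw [htr] at this
    exact_mod_cast this.symm
  have hαsum : ∑ a, α a = 1 := by
    have := trace_eq_sum_eig h1.1
    rw [trace_ptrace2, htr] at this
    exact_mod_cast this.symm
  have hβsum : ∑ b, β b = 1 := by
    have := trace_eq_sum_eig h2.1
    rw [trace_ptrace1, htr] at this
    exact_mod_cast this.symm
  have hqsum : ∑ j, q j = 1 := by
    rw [hqdef, Fintype.sum_prod_type]
    simp only [← Finset.mul_sum, hβsum, mul_one]
    exact hαsum
  -- eigencolumn identities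
  have hUcol : ptrace2 ρ * U = U * diagonal (fun a => ((α a : ℂ))) := by
    conv_lhs => rw [hsp1]
    rw [Matrix.mul_assoc, hUU, Matrix.mul_one]
  have hVcol : ptrace1 ρ * V = V * diagonal (fun b => ((β b : ℂ))) := by
    conv_lhs => rw [hsp2]
    rw [Matrix.mul_assoc, hVV, Matrix.mul_one]
  have hUvec : ∀ a, (ptrace2 ρ) *ᵥ (fun i => U i a) = fun k => (α a : ℂ) * U k a := by
    intro a
    funext k
    have hh := congrFun (congrFun hUcol k) a
    rw [mul_apply, mul_diagonal] at hh
    simpa [mulVec, dotProduct, mul_comm] using hh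
  have hVvec : ∀ b, (ptrace1 ρ) *ᵥ (fun k => V k b) = fun k => (β b : ℂ) * V k b := by
    intro b
    funext k
    have hh := congrFun (congrFun hVcol k) b
    rw [mul_apply, mul_diagonal] at hh
    simpa [mulVec, dotProduct, mul_comm] using hh
  -- kernel lemma
  have hker : ∀ j : n₁ × n₂, q j = 0 → ρ *ᵥ (fun k => W k j) = 0 := by
    rintro ⟨a, b⟩ hqj
    have hWcol : (fun k : n₁ × n₂ => W k (a, b)) = fun k : n₁ × n₂ => U k.1 a * V k.2 b := rfl
    rcases mul_eq_zero.mp hqj with hz | hz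
    · set x : n₁ → ℂ := fun i => U i a with hxdef
      have hx : (ptrace2 ρ) *ᵥ x = 0 := by
        rw [hUvec a]
        funext k
        rw [hz]
        simp
      have hkey := key2 ρ V hVV' x
      rw [hx, dotProduct_zero] at hkey
      have hterm := (Finset.sum_eq_zero_iff_of_nonneg
        (fun b' (_ : b' ∈ Finset.univ) => hρ.dotProduct_mulVec_nonneg (fun p : n₁ × n₂ => x p.1 * V p.2 b'))).mp hkey
        b (Finset.mem_univ b)
      have := (hρ.dotProduct_mulVec_zero_iff (fun p : n₁ × n₂ => x p.1 * V p.2 b)).mp hterm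
      rw [hWcol]
      exact this
    · set y : n₂ → ℂ := fun k => V k b with hydef
      have hy : (ptrace1 ρ) *ᵥ y = 0 := by
        rw [hVvec b]
        funext k
        rw [hz]
        simp
      have hkey := key1 ρ U hUU' y
      rw [hy, dotProduct_zero] at hkey
      have hterm := (Finset.sum_eq_zero_iff_of_nonneg
        (fun a' (_ : a' ∈ Finset.univ) => hρ.dotProduct_mulVec_nonneg (fun p : n₁ × n₂ => U p.1 a' * y p.2))).mp hkey
        a (Finset.mem_univ a)
      have := (hρ.dotProduct_mulVec_zero_iff (fun p : n₁ × n₂ => U p.1 a * y p.2)).mp hterm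
      rw [hWcol]
      exact this
  -- support of M
  have hMsupp : ∀ i j, q j = 0 → p i ≠ 0 → M i j = 0 := by
    intro i j hqj hpi
    have hPρ : Pᴴ * ρ = diagonal (fun i => ((p i : ℂ))) * Pᴴ := by
      conv_lhs => rw [hsp]
      rw [← Matrix.mul_assoc, ← Matrix.mul_assoc, hPP, Matrix.one_mul]
    have hDM : diagonal (fun i => ((p i : ℂ))) * M = Pᴴ * (ρ * W) := by
      rw [hMdef, ← Matrix.mul_assoc, ← hPρ, Matrix.mul_assoc]
    have hzero : (diagonal (fun i => ((p i : ℂ))) * M) i j = 0 := by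
      rw [hDM, mul_apply]
      apply Finset.sum_eq_zero
      intro k _
      have hcol0 : (ρ * W) k j = 0 := by
        have := congrFun (hker j hqj) k
        simpa [mulVec, dotProduct, mul_apply] using this
      rw [hcol0, mul_zero]
    rw [diagonal_mul] at hzero
    rcases mul_eq_zero.mp hzero with hh | hh
    · exact absurd (by exact_mod_cast hh) hpi
    · exact hh
  have hcsupp : ∀ i j, q j = 0 → p i ≠ 0 → c i j = 0 := by
    intro i j hqj hpi
    rw [hcdef]
    simp only
    rw [hMsupp i j hqj hpi, Complex.normSq_zero]
  set t : n₁ × n₂ → ℝ := fun j => ∑ i, p i * c i j with htdef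
  have ht0 : ∀ j, 0 ≤ t j := fun j => Finset.sum_nonneg fun i _ => mul_nonneg (hp0 i) (hc0 i j)
  have htq : ∀ j, q j = 0 → t j = 0 := by
    intro j hqj
    apply Finset.sum_eq_zero
    intro i _
    by_cases hpi : p i = 0
    · rw [hpi, zero_mul]
    · rw [hcsupp i j hqj hpi, mul_zero]
  -- diagonal entries of Wᴴ ρ W
  have hWρW : ∀ j, (Wᴴ * ρ * W) j j = ((t j : ℝ) : ℂ) := by
    intro j
    have e1 : Wᴴ * ρ * W = Mᴴ * diagonal (fun i => ((p i : ℂ))) * M := by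
      conv_lhs => rw [hsp]
      rw [hMH, hMdef]
      simp only [Matrix.mul_assoc]
    rw [e1, conj_col_quad, quad_eq]
    calc ∑ k, ∑ l, (starRingEnd ℂ) (M k j) * (diagonal fun i => ((p i : ℂ))) k l * M l j
        = ∑ k, (starRingEnd ℂ) (M k j) * ((p k : ℂ)) * M k j := by
          refine Finset.sum_congr rfl fun k _ => ?_
          rw [Finset.sum_eq_single k]
          · rw [diagonal_apply_eq]
          · intro l _ hl
            rw [diagonal_apply_ne _ (Ne.symm hl), mul_zero, zero_mul]
          · intro hk
            exact absurd (Finset.mem_univ k) hk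
      _ = ((t j : ℝ) : ℂ) := by
          rw [htdef]
          push_cast
          refine Finset.sum_congr rfl fun k _ => ?_
          calc (starRingEnd ℂ) (M k j) * ((p k : ℂ)) * M k j
              = ((p k : ℂ)) * (M k j * (starRingEnd ℂ) (M k j)) := by ring
            _ = ((p k : ℂ)) * ((c k j : ℝ) : ℂ) := by rw [Complex.mul_conj]
  -- marginals of t
  have htsum_a : ∀ a, ∑ b, t (a, b) = α a := by
    intro a
    have hnorm : ∑ k, (starRingEnd ℂ) (U k a) * U k a = 1 := by
      have hh := congrFun (congrFun hUU a) a
      rw [mul_apply, one_apply_eq] at hh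
      rw [← hh]
      exact Finset.sum_congr rfl fun k _ => by rw [conjTranspose_apply, Complex.star_def]
    have hcast : ∑ b, ((t (a, b) : ℝ) : ℂ) = ((α a : ℝ) : ℂ) := by
      calc ∑ b, ((t (a, b) : ℝ) : ℂ)
          = ∑ b, (Wᴴ * ρ * W) (a, b) (a, b) :=
            Finset.sum_congr rfl fun b _ => (hWρW (a, b)).symm
        _ = ∑ b, star (fun pr : n₁ × n₂ => U pr.1 a * V pr.2 b) ⬝ᵥ
              ρ *ᵥ (fun pr : n₁ × n₂ => U pr.1 a * V pr.2 b) :=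
            Finset.sum_congr rfl fun b _ => conj_col_quad W ρ (a, b)
        _ = star (fun i => U i a) ⬝ᵥ (ptrace2 ρ) *ᵥ (fun i => U i a) :=
            key2 ρ V hVV' (fun i => U i a)
        _ = ((α a : ℝ) : ℂ) := by
            rw [hUvec a]
            simp only [dotProduct, Pi.star_apply, Complex.star_def]
            calc ∑ k, (starRingEnd ℂ) (U k a) * ((α a : ℂ) * U k a)
                = ((α a : ℂ)) * ∑ k, (starRingEnd ℂ) (U k a) * U k a := by
                  rw [Finset.mul_sum]
                  exact Finset.sum_congr rfl fun k _ => by ring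
              _ = ((α a : ℝ) : ℂ) := by rw [hnorm, mul_one]
    exact_mod_cast hcast
  have htsum_b : ∀ b, ∑ a, t (a, b) = β b := by
    intro b
    have hnorm : ∑ k, (starRingEnd ℂ) (V k b) * V k b = 1 := by
      have hh := congrFun (congrFun hVV b) b
      rw [mul_apply, one_apply_eq] at hh
      rw [← hh]
      exact Finset.sum_congr rfl fun k _ => by rw [conjTranspose_apply, Complex.star_def]
    have hcast : ∑ a, ((t (a, b) : ℝ) : ℂ) = ((β b : ℝ) : ℂ) := by
      calc ∑ a, ((t (a, b) : ℝ) : ℂ)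
          = ∑ a, (Wᴴ * ρ * W) (a, b) (a, b) :=
            Finset.sum_congr rfl fun a _ => (hWρW (a, b)).symm
        _ = ∑ a, star (fun pr : n₁ × n₂ => U pr.1 a * V pr.2 b) ⬝ᵥ
              ρ *ᵥ (fun pr : n₁ × n₂ => U pr.1 a * V pr.2 b) :=
            Finset.sum_congr rfl fun a _ => conj_col_quad W ρ (a, b)
        _ = star (fun k => V k b) ⬝ᵥ (ptrace1 ρ) *ᵥ (fun k => V k b) :=
            key1 ρ U hUU' (fun k => V k b)
        _ = ((β b : ℝ) : ℂ) := by
            rw [hVvec b]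
            simp only [dotProduct, Pi.star_apply, Complex.star_def]
            calc ∑ k, (starRingEnd ℂ) (V k b) * ((β b : ℂ) * V k b)
                = ((β b : ℂ)) * ∑ k, (starRingEnd ℂ) (V k b) * V k b := by
                  rw [Finset.mul_sum]
                  exact Finset.sum_congr rfl fun k _ => by ring
              _ = ((β b : ℝ) : ℂ) := by rw [hnorm, mul_one]
    exact_mod_cast hcast
  -- the averaged eigenvalue vector r
  set r : (n₁ × n₂) → ℝ := fun i => ∑ j, c i j * q j with hrdef
  have hrsum : ∑ i, r i = 1 := by
    rw [hrdef]
    simp only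
    rw [Finset.sum_comm]
    calc ∑ j, ∑ i, c i j * q j = ∑ j, q j := by
          refine Finset.sum_congr rfl fun j _ => ?_
          rw [← Finset.sum_mul, hcol, one_mul]
      _ = 1 := hqsum
  -- final entropy chain
  rw [vNE_eq h, vNE_eq h1.1, vNE_eq h2.1]
  have step1 : ∑ a, ent (α a) + ∑ b, ent (β b) = ∑ j, t j * Real.logb 2 (q j) := by
    have e : ∀ j : n₁ × n₂, t j * Real.logb 2 (q j)
        = t j * Real.logb 2 (α j.1) + t j * Real.logb 2 (β j.2) := by
      intro j
      by_cases hqj : q j = 0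
      · rw [htq j hqj, zero_mul, zero_mul, zero_mul, add_zero]
      · have hα' : α j.1 ≠ 0 := fun hh => hqj (by rw [hqdef]; simp only; rw [hh, zero_mul])
        have hβ' : β j.2 ≠ 0 := fun hh => hqj (by rw [hqdef]; simp only; rw [hh, mul_zero])
        rw [show q j = α j.1 * β j.2 from rfl, Real.logb_mul hα' hβ', mul_add]
    rw [Finset.sum_congr rfl fun j _ => e j, Finset.sum_add_distrib]
    congr 1
    · rw [Fintype.sum_prod_type]
      symm
      calc ∑ a, ∑ b, t (a, b) * Real.logb 2 (α a)
          = ∑ a, (∑ b, t (a, b)) * Real.logb 2 (α a) := by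
            exact Finset.sum_congr rfl fun a _ => (Finset.sum_mul _ _ _).symm
        _ = ∑ a, α a * Real.logb 2 (α a) := by
            refine Finset.sum_congr rfl fun a _ => ?_
            rw [htsum_a a]
        _ = ∑ a, ent (α a) := rfl
    · rw [Fintype.sum_prod_type, Finset.sum_comm]
      symm
      calc ∑ b, ∑ a, t (a, b) * Real.logb 2 (β b)
          = ∑ b, (∑ a, t (a, b)) * Real.logb 2 (β b) := by
            exact Finset.sum_congr rfl fun b _ => (Finset.sum_mul _ _ _).symm
        _ = ∑ b, β b * Real.logb 2 (β b) := by
            refine Finset.sum_congr rfl fun b _ => ?_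
            rw [htsum_b b]
        _ = ∑ b, ent (β b) := rfl
  have step2 : ∑ j, t j * Real.logb 2 (q j) ≤ ∑ i, ent (p i) := by
    have hswap : ∑ j, t j * Real.logb 2 (q j)
        = ∑ i, p i * ∑ j, c i j * Real.logb 2 (q j) := by
      rw [htdef]
      simp only [Finset.sum_mul]
      rw [Finset.sum_comm]
      refine Finset.sum_congr rfl fun i _ => ?_
      rw [Finset.mul_sum]
      exact Finset.sum_congr rfl fun j _ => by ring
    rw [hswap]
    have hlog2 : (0 : ℝ) < Real.log 2 := Real.log_pos one_lt_two
    have per_i : ∀ i, p i * ∑ j, c i j * Real.logb 2 (q j)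
        ≤ ent (p i) + (r i - p i) / Real.log 2 := by
      intro i
      by_cases hpi : p i = 0
      · rw [hpi]
        simp only [zero_mul, ent, Real.logb, zero_mul, sub_zero, zero_add]
        have hr0 : 0 ≤ r i := Finset.sum_nonneg fun j _ => mul_nonneg (hc0 i j) (hq0 j)
        positivity
      · have hpi' : 0 < p i := (hp0 i).lt_of_ne (Ne.symm hpi)
        have hjen := jensen_logb (c i) q (hc0 i) hq0 (hrow i) (fun j hqj => hcsupp i j hqj hpi)
        have hrpos : 0 < r i := hjen.1
        have hJ : ∑ j, c i j * Real.logb 2 (q j) ≤ Real.logb 2 (r i) := hjen.2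
        have hG : Real.logb 2 (r i) ≤ Real.logb 2 (p i) + (r i / p i - 1) / Real.log 2 := by
          have hlsub : Real.log (r i / p i) ≤ r i / p i - 1 :=
            Real.log_le_sub_one_of_pos (by positivity)
          rw [Real.log_div hrpos.ne' hpi] at hlsub
          rw [Real.logb, Real.logb, ← add_div]
          gcongr
          linarith
        calc p i * ∑ j, c i j * Real.logb 2 (q j)
            ≤ p i * Real.logb 2 (r i) := mul_le_mul_of_nonneg_left hJ (hp0 i)
          _ ≤ p i * (Real.logb 2 (p i) + (r i / p i - 1) / Real.log 2) :=
              mul_le_mul_of_nonneg_left hG (hp0 i)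
          _ = ent (p i) + (r i - p i) / Real.log 2 := by
              rw [ent]
              field_simp
    calc ∑ i, p i * ∑ j, c i j * Real.logb 2 (q j)
        ≤ ∑ i, (ent (p i) + (r i - p i) / Real.log 2) := Finset.sum_le_sum fun i _ => per_i i
      _ = ∑ i, ent (p i) + ((∑ i, r i) - ∑ i, p i) / Real.log 2 := by
          rw [Finset.sum_add_distrib]
          congr 1
          rw [← Finset.sum_div, Finset.sum_sub_distrib]
      _ = ∑ i, ent (p i) := by
          rw [hrsum, hpsum]
          simp
  linarith [step1, step2]

end Stmt5Aux

open Stmt5Aux in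
/-- superadditivity of the Holevo quantity when the average is a
product state: I(s;σ) ≥ I(s;Tr₂σ) + I(s;Tr₁σ). -/
theorem stmt_5 {n₁ n₂ : Type*} [Fintype n₁] [Fintype n₂] [DecidableEq n₁] [DecidableEq n₂]
    {r : ℕ} (σ : Fin r → Matrix (n₁ × n₂) (n₁ × n₂) ℂ) (s : Fin r → ℝ)
    (hσ : ∀ i, (σ i).PosSemidef ∧ (σ i).trace = 1)
    (hs : ∀ i, 0 ≤ s i) (hsum : ∑ i, s i = 1)
    (hprod : ∃ (τ₁ : Matrix n₁ n₁ ℂ) (τ₂ : Matrix n₂ n₂ ℂ),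
      τ₁.PosSemidef ∧ τ₁.trace = 1 ∧ τ₂.PosSemidef ∧ τ₂.trace = 1 ∧
      ∑ i, (s i : ℂ) • σ i = τ₁ ⊗ₖ τ₂) :
    holevo s (fun i => ptrace2 (σ i)) + holevo s (fun i => ptrace1 (σ i))
      ≤ holevo s σ := by
  obtain ⟨τ₁, τ₂, hτ₁, ht₁, hτ₂, ht₂, havg⟩ := hprod
  have hlin2 : ∑ i, (s i : ℂ) • ptrace2 (σ i) = τ₁ := by
    have hl : ∑ i, (s i : ℂ) • ptrace2 (σ i) = ptrace2 (∑ i, (s i : ℂ) • σ i) := by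
      ext a b
      show (∑ i, (s i : ℂ) • ptrace2 (σ i)) a b = ∑ k : n₂, (∑ i, (s i : ℂ) • σ i) (a, k) (b, k)
      simp only [Matrix.sum_apply, Matrix.smul_apply, ptrace2, Matrix.of_apply, smul_eq_mul,
        Finset.mul_sum]
      rw [Finset.sum_comm]
    rw [hl, havg]
    ext a b
    show ∑ k : n₂, (τ₁ ⊗ₖ τ₂) (a, k) (b, k) = τ₁ a b
    calc ∑ k : n₂, τ₁ a b * τ₂ k k = τ₁ a b * τ₂.trace := by
          rw [← Finset.mul_sum]; rfl
      _ = τ₁ a b := by rw [ht₂, mul_one]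
  have hlin1 : ∑ i, (s i : ℂ) • ptrace1 (σ i) = τ₂ := by
    have hl : ∑ i, (s i : ℂ) • ptrace1 (σ i) = ptrace1 (∑ i, (s i : ℂ) • σ i) := by
      ext a b
      show (∑ i, (s i : ℂ) • ptrace1 (σ i)) a b = ∑ k : n₁, (∑ i, (s i : ℂ) • σ i) (k, a) (k, b)
      simp only [Matrix.sum_apply, Matrix.smul_apply, ptrace1, Matrix.of_apply, smul_eq_mul,
        Finset.mul_sum]
      rw [Finset.sum_comm]
    rw [hl, havg]
    ext a b
    show ∑ k : n₁, (τ₁ ⊗ₖ τ₂) (k, a) (k, b) = τ₂ a b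
    calc ∑ k : n₁, τ₁ k k * τ₂ a b = τ₁.trace * τ₂ a b := by
          rw [← Finset.sum_mul]; rfl
      _ = τ₂ a b := by rw [ht₁, one_mul]
  have hsub := Finset.sum_le_sum fun i (_ : i ∈ Finset.univ) =>
    mul_le_mul_of_nonneg_left (vNE_subadd (σ i) (hσ i).1 (hσ i).2) (hs i)
  simp only [mul_add] at hsub
  rw [Finset.sum_add_distrib] at hsub
  unfold holevo
  rw [hlin2, hlin1, havg, vNE_kron hτ₁ ht₁ hτ₂ ht₂]
  linarith
end
end

section
/- Let ρ be a positive definite density operator on a finite-dimensional Hilbert space and (a_j)_{j=1..m} a POVM. Define λ_j = Tr(ρ a_j) and, when λ_j > 0, ρ̂_j = (1/λ_j)·√ρ a_j √ρ. Then each ρ̂_j is a density operator, Σ_j λ_j ρ̂_j = ρ, and a_j = √(ρ⁻¹)·λ_j ρ̂_j·√(ρ⁻¹), i.e., the 'pretty good measurement' of the ensemble {ρ̂_j, λ_j} recovers (a_j). -/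
open scoped ComplexOrder
open Matrix

noncomputable section

/-- The positive semidefinite square root of a positive semidefinite matrix
(as defined in Mathlib of December 2024; removed since). -/
def Matrix.PosSemidef.sqrt {n : Type*} [Fintype n] [DecidableEq n] {𝕜 : Type*} [RCLike 𝕜]
    {A : Matrix n n 𝕜} (hA : A.PosSemidef) : Matrix n n 𝕜 :=
  (hA.1.eigenvectorUnitary : Matrix n n 𝕜) *
    diagonal (fun i => ((√(hA.1.eigenvalues i) : ℝ) : 𝕜)) *
    (star hA.1.eigenvectorUnitary : Matrix n n 𝕜)

/-!
Writing `S = √ρ`, every `λ_j ρ̂_j` equals `S a_j S`, also when `λ_j = 0`: then `S a_j S` is a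
positive semidefinite matrix of trace `Tr(ρ a_j) = λ_j = 0`, hence zero. The three claims follow
from `Σ_j a_j = 1`, `S S = ρ` and `√(ρ⁻¹) = S⁻¹`.
-/

namespace Matrix

variable {n 𝕜 : Type*} [Fintype n] [RCLike 𝕜]

section Sqrt

variable [DecidableEq n]

open scoped MatrixOrder

lemma PosSemidef.sqrt_eq_cfcSqrt {A : Matrix n n 𝕜} (hA : A.PosSemidef) :
    hA.sqrt = CFC.sqrt A := by
  rw [CFC.sqrt_eq_cfc, cfc_nnreal_eq_real _ A, hA.1.cfc_eq]
  simp only [PosSemidef.sqrt, IsHermitian.cfc, Unitary.conjStarAlgAut_apply]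
  congr 3
  funext i
  simp [max_eq_left (hA.eigenvalues_nonneg i)]

lemma PosSemidef.posSemidef_sqrt {A : Matrix n n 𝕜} (hA : A.PosSemidef) :
    hA.sqrt.PosSemidef := by
  rw [hA.sqrt_eq_cfcSqrt]
  exact (CFC.sqrt_nonneg A).posSemidef

lemma PosSemidef.sqrt_mul_self {A : Matrix n n 𝕜} (hA : A.PosSemidef) :
    hA.sqrt * hA.sqrt = A := by
  rw [hA.sqrt_eq_cfcSqrt]
  exact CFC.sqrt_mul_sqrt_self A hA.nonneg

lemma PosDef.sqrt_inv {A : Matrix n n 𝕜} (hA : A.PosDef) :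
    hA.inv.posSemidef.sqrt = hA.posSemidef.sqrt⁻¹ := by
  rw [PosSemidef.sqrt_eq_cfcSqrt, PosSemidef.sqrt_eq_cfcSqrt, hA.posSemidef.inv_sqrt]

lemma PosDef.isUnit_det_sqrt {A : Matrix n n 𝕜} (hA : A.PosDef) :
    IsUnit hA.posSemidef.sqrt.det := by
  have hdet : IsUnit (hA.posSemidef.sqrt.det * hA.posSemidef.sqrt.det) := by
    rw [← det_mul, hA.posSemidef.sqrt_mul_self]
    exact hA.isUnit.map detMonoidHom
  exact isUnit_of_mul_isUnit_left hdet

end Sqrt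

lemma PosSemidef.ofReal_re_trace {X : Matrix n n 𝕜} (hX : X.PosSemidef) :
    ((RCLike.re X.trace : ℝ) : 𝕜) = X.trace := by
  obtain ⟨x, -, hx⟩ := RCLike.nonneg_iff_exists_ofReal.mp hX.trace_nonneg
  rw [← hx, RCLike.ofReal_re]

lemma PosSemidef.trace_smul_inv_trace_smul {X : Matrix n n 𝕜} (hX : X.PosSemidef) :
    X.trace • (X.trace⁻¹ • X) = X := by
  by_cases h : X.trace = 0
  · rw [hX.trace_eq_zero_iff.mp h, smul_zero, smul_zero]
  · rw [smul_smul, mul_inv_cancel₀ h, one_smul]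

lemma PosSemidef.posSemidef_inv_trace_smul {X : Matrix n n 𝕜} (hX : X.PosSemidef) :
    (X.trace⁻¹ • X).PosSemidef :=
  hX.smul (inv_nonneg_of_nonneg hX.trace_nonneg)

lemma trace_inv_trace_smul {X : Matrix n n 𝕜} (h : X.trace ≠ 0) :
    (X.trace⁻¹ • X).trace = 1 := by
  rw [trace_smul, smul_eq_mul, inv_mul_cancel₀ h]

end Matrix

theorem stmt_7_general {n : Type*} [Fintype n] [DecidableEq n] {m : ℕ}
    (ρ : Matrix n n ℂ) (hρ : ρ.PosDef)
    (a : Fin m → Matrix n n ℂ)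
    (ha : ∀ j, (a j).PosSemidef) (hsum : ∑ j, a j = 1)
    (lam : Fin m → ℝ) (hlam : ∀ j, lam j = (Matrix.trace (ρ * a j)).re)
    (rhat : Fin m → Matrix n n ℂ)
    (hrhat : ∀ j, rhat j =
      (lam j : ℂ)⁻¹ • (hρ.posSemidef.sqrt * a j * hρ.posSemidef.sqrt)) :
    (∀ j, 0 < lam j → (rhat j).PosSemidef ∧ (rhat j).trace = 1) ∧
    (∑ j, (lam j : ℂ) • rhat j = ρ) ∧
    (∀ j, 0 < lam j →
      a j = hρ.inv.posSemidef.sqrt * ((lam j : ℂ) • rhat j) * hρ.inv.posSemidef.sqrt) := by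
  set S := hρ.posSemidef.sqrt
  have hX j : (S * a j * S).PosSemidef := by
    have hSaS := (ha j).mul_mul_conjTranspose_same S
    rwa [hρ.posSemidef.posSemidef_sqrt.1.eq] at hSaS
  have hlam_trace j : (lam j : ℂ) = (S * a j * S).trace := by
    have htr : (S * a j * S).trace = (ρ * a j).trace := by
      rw [trace_mul_cycle, hρ.posSemidef.sqrt_mul_self]
    rw [hlam, ← htr]
    exact (hX j).ofReal_re_trace
  have hrhat_eq j : rhat j = (S * a j * S).trace⁻¹ • (S * a j * S) := by
    rw [hrhat, hlam_trace]
  have hlam_rhat j : (lam j : ℂ) • rhat j = S * a j * S := by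
    rw [hrhat_eq, hlam_trace]
    exact (hX j).trace_smul_inv_trace_smul
  refine ⟨fun j hj => ?_, ?_, fun j _ => ?_⟩
  · have htr : (S * a j * S).trace ≠ 0 := by
      rw [← hlam_trace]
      exact_mod_cast hj.ne'
    rw [hrhat_eq]
    exact ⟨(hX j).posSemidef_inv_trace_smul, trace_inv_trace_smul htr⟩
  · simp_rw [hlam_rhat, ← Finset.sum_mul, ← Finset.mul_sum, hsum, mul_one]
    exact hρ.posSemidef.sqrt_mul_self
  · rw [hlam_rhat, hρ.sqrt_inv, ← Matrix.mul_assoc, ← Matrix.mul_assoc,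
      mul_nonsing_inv_cancel_right _ _ hρ.isUnit_det_sqrt,
      nonsing_inv_mul _ hρ.isUnit_det_sqrt, Matrix.one_mul]

/-- the canonical ensemble {ρ̂_j, λ_j} of a POVM (a_j) and a state ρ:
each ρ̂_j is a density operator, Σ_j λ_j ρ̂_j = ρ, and the pretty good measurement
of the ensemble recovers (a_j). -/
theorem stmt_7 {n : Type*} [Fintype n] [DecidableEq n] {m : ℕ}
    (ρ : Matrix n n ℂ) (hρ : ρ.PosDef) (hρt : ρ.trace = 1)
    (a : Fin m → Matrix n n ℂ)
    (ha : ∀ j, (a j).PosSemidef) (hsum : ∑ j, a j = 1)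
    (lam : Fin m → ℝ) (hlam : ∀ j, lam j = (Matrix.trace (ρ * a j)).re)
    (rhat : Fin m → Matrix n n ℂ)
    (hrhat : ∀ j, rhat j =
      (lam j : ℂ)⁻¹ • (hρ.posSemidef.sqrt * a j * hρ.posSemidef.sqrt)) :
    (∀ j, 0 < lam j → (rhat j).PosSemidef ∧ (rhat j).trace = 1) ∧
    (∑ j, (lam j : ℂ) • rhat j = ρ) ∧
    (∀ j, 0 < lam j →
      a j = hρ.inv.posSemidef.sqrt * ((lam j : ℂ) • rhat j) * hρ.inv.posSemidef.sqrt) :=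
  stmt_7_general ρ hρ a ha hsum lam hlam rhat hrhat
end
end
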